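/- Let p, q be Borel probability measures on ℝ^d, and let noise variables have conditional second moment α(φ) with overall mean ᾱ = E_{φ~g}[α(φ)]. If the kernel k(x,y) = κ₀(x−y) is translation invariant with κ₀ Lipschitz of constant L_k, then |MMD²(p,q) − MMD²(p*m, q*m)| ≤ 4 L_k √(2ᾱ), where MMD² is computed with kernel k in both cases. -/

import Mathlib

open MeasureTheory ProbabilityTheory Complex
open scoped InnerProductSpace ENNReal NNReal

noncomputable def mconv {d : ℕ} (p m : Measure (EuclideanSpace ℝ (Fin d))) :
    Measure (EuclideanSpace ℝ (Fin d)) :=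
  (p.prod m).map (fun z => z.1 + z.2)

/-- Squared MMD with translation-invariant kernel k(x,y) = κ₀(x−y). -/
noncomputable def MMD2 {d : ℕ} (κ₀ : EuclideanSpace ℝ (Fin d) → ℝ)
    (ν₁ ν₂ : Measure (EuclideanSpace ℝ (Fin d))) : ℝ :=
  (∫ z, κ₀ (z.1 - z.2) ∂(ν₁.prod ν₁)) + (∫ z, κ₀ (z.1 - z.2) ∂(ν₂.prod ν₂))
    - 2 * (∫ z, κ₀ (z.1 - z.2) ∂(ν₁.prod ν₂))

/-- Jensen / variance nonnegativity: (∫ f)² ≤ ∫ f² for a probability measure. -/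
lemma aux_sq_integral_le {α : Type*} [MeasurableSpace α] (μ : Measure α)
    [IsProbabilityMeasure μ] {f : α → ℝ} (hf : Integrable f μ)
    (hf2 : Integrable (fun x => f x ^ 2) μ) :
    (∫ x, f x ∂μ) ^ 2 ≤ ∫ x, f x ^ 2 ∂μ := by
  set c := ∫ x, f x ∂μ with hc
  have h0 : (0:ℝ) ≤ ∫ x, (f x - c) ^ 2 ∂μ := integral_nonneg fun x => sq_nonneg _
  have hexp : ∫ x, (f x - c) ^ 2 ∂μ = (∫ x, f x ^ 2 ∂μ) - c ^ 2 := by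
    have hint : Integrable (fun x => f x ^ 2 - 2 * c * f x) μ :=
      hf2.sub (hf.const_mul (2 * c))
    have : ∀ x, (f x - c) ^ 2 = (f x ^ 2 - 2 * c * f x) + c ^ 2 := by intro x; ring
    simp_rw [this]
    rw [integral_add hint (integrable_const _), integral_sub hf2 (hf.const_mul (2 * c)),
      integral_const_mul, integral_const]
    simp only [probReal_univ, measure_univ, ENNReal.toReal_one, smul_eq_mul, one_mul, ← hc]
    ring
  linarith [h0, hexp.symm ▸ h0]

/-- The mean pairwise distance of two independent m-samples is at most √(2 ᾱ). -/
lemma aux_moment_bound {d : ℕ} (m : Measure (EuclideanSpace ℝ (Fin d)))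
    [IsProbabilityMeasure m]
    (hmem : MemLp (fun u : EuclideanSpace ℝ (Fin d) => u) 2 m)
    (αbar : ℝ) (hα : (∫ u, ‖u‖ ^ 2 ∂m) = αbar) :
    ∫ z, ‖z.1 - z.2‖ ∂(m.prod m) ≤ Real.sqrt (2 * αbar) := by
  have hint1 : Integrable (fun u : EuclideanSpace ℝ (Fin d) => u) m :=
    hmem.integrable one_le_two
  have hint2 : Integrable (fun u : EuclideanSpace ℝ (Fin d) => ‖u‖ ^ 2) m :=
    (memLp_two_iff_integrable_sq_norm hmem.aestronglyMeasurable).mp hmem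
  have hnorm : Integrable (fun u : EuclideanSpace ℝ (Fin d) => ‖u‖) m := hint1.norm
  set M2 := m.prod m with hM2
  -- integrable pieces on the product
  have hf1 : Integrable (fun z : EuclideanSpace ℝ (Fin d) × EuclideanSpace ℝ (Fin d) =>
      ‖z.1‖ ^ 2) M2 := by
    simpa using hint2.mul_prod (integrable_const (1:ℝ))
  have hf2 : Integrable (fun z : EuclideanSpace ℝ (Fin d) × EuclideanSpace ℝ (Fin d) =>
      ‖z.2‖ ^ 2) M2 := by
    simpa using (integrable_const (1:ℝ)).mul_prod hint2
  have hcross : Integrable (fun z : EuclideanSpace ℝ (Fin d) × EuclideanSpace ℝ (Fin d) =>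
      ‖z.1‖ * ‖z.2‖) M2 := hnorm.mul_prod hnorm
  have hinner : Integrable (fun z : EuclideanSpace ℝ (Fin d) × EuclideanSpace ℝ (Fin d) =>
      (inner ℝ z.1 z.2 : ℝ)) M2 := by
    refine hcross.mono' ?_ ?_
    · exact (continuous_inner.comp (continuous_fst.prodMk continuous_snd)).aestronglyMeasurable
    · filter_upwards with z
      simpa [Real.norm_eq_abs] using abs_real_inner_le_norm z.1 z.2
  have hsub : Integrable (fun z : EuclideanSpace ℝ (Fin d) × EuclideanSpace ℝ (Fin d) =>
      ‖z.1 - z.2‖) M2 := by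
    refine ((hnorm.mul_prod (integrable_const (1:ℝ))).add
      ((integrable_const (1:ℝ)).mul_prod hnorm)).mono' ?_ ?_
    · exact (continuous_fst.sub continuous_snd).norm.aestronglyMeasurable
    · filter_upwards with z
      simp only [mul_one, one_mul, Real.norm_eq_abs, abs_norm]
      exact norm_sub_le _ _
  have hsub2 : Integrable (fun z : EuclideanSpace ℝ (Fin d) × EuclideanSpace ℝ (Fin d) =>
      ‖z.1 - z.2‖ ^ 2) M2 := by
    have : (fun z : EuclideanSpace ℝ (Fin d) × EuclideanSpace ℝ (Fin d) => ‖z.1 - z.2‖ ^ 2)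
        = fun z => ‖z.1‖ ^ 2 - 2 * (inner ℝ z.1 z.2 : ℝ) + ‖z.2‖ ^ 2 := by
      funext z; exact norm_sub_sq_real z.1 z.2
    rw [this]
    exact (hf1.sub (hinner.const_mul 2)).add hf2
  -- compute the second moment of the difference
  have hfst : ∫ z, ‖z.1‖ ^ 2 ∂M2 = αbar := by
    rw [hM2, MeasureTheory.integral_prod _ hf1]
    simp [hα]
  have hsnd : ∫ z, ‖z.2‖ ^ 2 ∂M2 = αbar := by
    rw [hM2, MeasureTheory.integral_prod _ hf2]
    simp [hα]
  have hinnerval : ∫ z, (inner ℝ z.1 z.2 : ℝ) ∂M2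
      = (inner ℝ (∫ u, u ∂m) (∫ u, u ∂m) : ℝ) := by
    rw [hM2, MeasureTheory.integral_prod _ hinner]
    have h1 : (∫ x, ∫ y, (inner ℝ x y : ℝ) ∂m ∂m)
        = ∫ x, (inner ℝ x (∫ u, u ∂m) : ℝ) ∂m := by
      refine integral_congr_ae (Filter.Eventually.of_forall fun x => ?_)
      exact integral_inner hint1 x
    have h2 : (∫ x, (inner ℝ x (∫ u, u ∂m) : ℝ) ∂m)
        = (inner ℝ (∫ u, u ∂m) (∫ u, u ∂m) : ℝ) := by
      rw [← integral_inner hint1]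
      exact integral_congr_ae (Filter.Eventually.of_forall fun x => real_inner_comm _ _)
    rw [h1, h2]
  have hm2 : ∫ z, ‖z.1 - z.2‖ ^ 2 ∂M2 ≤ 2 * αbar := by
    have heq : ∫ z, ‖z.1 - z.2‖ ^ 2 ∂M2
        = αbar + αbar - 2 * (inner ℝ (∫ u, u ∂m) (∫ u, u ∂m) : ℝ) := by
      have : (fun z : EuclideanSpace ℝ (Fin d) × EuclideanSpace ℝ (Fin d) => ‖z.1 - z.2‖ ^ 2)
          = fun z => ‖z.1‖ ^ 2 - 2 * (inner ℝ z.1 z.2 : ℝ) + ‖z.2‖ ^ 2 := by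
        funext z; exact norm_sub_sq_real z.1 z.2
      have hA : Integrable (fun z : EuclideanSpace ℝ (Fin d) × EuclideanSpace ℝ (Fin d) =>
          ‖z.1‖ ^ 2 - 2 * (inner ℝ z.1 z.2 : ℝ)) M2 := hf1.sub (hinner.const_mul 2)
      rw [this, integral_add hA hf2, integral_sub hf1 (hinner.const_mul 2),
        integral_const_mul, hfst, hsnd, hinnerval]
      ring
    have hnn : (0:ℝ) ≤ (inner ℝ (∫ u, u ∂m) (∫ u, u ∂m) : ℝ) := real_inner_self_nonneg
    linarith
  have hkey : (∫ z, ‖z.1 - z.2‖ ∂M2) ^ 2 ≤ 2 * αbar :=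
    le_trans (aux_sq_integral_le M2 hsub hsub2) hm2
  have hnn : (0:ℝ) ≤ ∫ z, ‖z.1 - z.2‖ ∂M2 := integral_nonneg fun z => norm_nonneg _
  have h2α : (0:ℝ) ≤ 2 * αbar := le_trans (sq_nonneg _) hkey
  exact (Real.le_sqrt hnn h2α).mpr hkey

/-- Shift bound for a single kernel mean term. -/
lemma aux_term_bound {d : ℕ} (κ₀ : EuclideanSpace ℝ (Fin d) → ℝ) (Lk : ℝ≥0)
    (hL : LipschitzWith Lk κ₀) (K : ℝ) (hbd : ∀ z, |κ₀ z| ≤ K)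
    (μ ν m : Measure (EuclideanSpace ℝ (Fin d)))
    [IsProbabilityMeasure μ] [IsProbabilityMeasure ν] [IsProbabilityMeasure m]
    (hidist : Integrable (fun z : EuclideanSpace ℝ (Fin d) × EuclideanSpace ℝ (Fin d) =>
      ‖z.1 - z.2‖) (m.prod m)) :
    |(∫ z, κ₀ (z.1 - z.2) ∂(μ.prod ν))
        - ∫ z, κ₀ (z.1 - z.2) ∂((mconv μ m).prod (mconv ν m))|
      ≤ Lk * ∫ z, ‖z.1 - z.2‖ ∂(m.prod m) := by
  haveI : BorelSpace ((EuclideanSpace ℝ (Fin d) × EuclideanSpace ℝ (Fin d)) ×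
      (EuclideanSpace ℝ (Fin d) × EuclideanSpace ℝ (Fin d))) := Prod.borelSpace
  set M := (μ.prod m).prod (ν.prod m) with hM
  have hκc : Continuous κ₀ := hL.continuous
  have hgc : Continuous (fun z : (EuclideanSpace ℝ (Fin d) × EuclideanSpace ℝ (Fin d)) => κ₀ (z.1 - z.2)) :=
    hκc.comp (continuous_fst.sub continuous_snd)
  have hA : Measurable (fun z : (EuclideanSpace ℝ (Fin d) × EuclideanSpace ℝ (Fin d)) => z.1 + z.2) :=
    (continuous_fst.add continuous_snd).measurable
  have hF : Measurable (Prod.map (fun z : (EuclideanSpace ℝ (Fin d) × EuclideanSpace ℝ (Fin d)) => z.1 + z.2) (fun z : (EuclideanSpace ℝ (Fin d) × EuclideanSpace ℝ (Fin d)) => z.1 + z.2)) :=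
    hA.prodMap hA
  have hG : Measurable (Prod.map (Prod.fst : (EuclideanSpace ℝ (Fin d) × EuclideanSpace ℝ (Fin d)) → EuclideanSpace ℝ (Fin d)) (Prod.fst : (EuclideanSpace ℝ (Fin d) × EuclideanSpace ℝ (Fin d)) → EuclideanSpace ℝ (Fin d))) :=
    measurable_fst.prodMap measurable_fst
  have hP : Measurable (Prod.map (Prod.snd : (EuclideanSpace ℝ (Fin d) × EuclideanSpace ℝ (Fin d)) → EuclideanSpace ℝ (Fin d)) (Prod.snd : (EuclideanSpace ℝ (Fin d) × EuclideanSpace ℝ (Fin d)) → EuclideanSpace ℝ (Fin d))) :=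
    measurable_snd.prodMap measurable_snd
  have e1 : (∫ z, κ₀ (z.1 - z.2) ∂((mconv μ m).prod (mconv ν m)))
      = ∫ w, κ₀ (w.1.1 + w.1.2 - (w.2.1 + w.2.2)) ∂M := by
    rw [mconv, mconv, Measure.map_prod_map _ _ hA hA,
      integral_map hF.aemeasurable hgc.aestronglyMeasurable]
    rfl
  have e2 : (∫ z, κ₀ (z.1 - z.2) ∂(μ.prod ν)) = ∫ w, κ₀ (w.1.1 - w.2.1) ∂M := by
    have h3 : (μ.prod ν) = M.map (Prod.map (Prod.fst : (EuclideanSpace ℝ (Fin d) × EuclideanSpace ℝ (Fin d)) → EuclideanSpace ℝ (Fin d)) Prod.fst) := by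
      rw [hM, ← Measure.map_prod_map _ _ measurable_fst measurable_fst]
      simp
    rw [h3, integral_map hG.aemeasurable hgc.aestronglyMeasurable]
    rfl
  have hK0 : (0:ℝ) ≤ K := le_trans (abs_nonneg _) (hbd 0)
  have ibd : ∀ f : ((EuclideanSpace ℝ (Fin d) × EuclideanSpace ℝ (Fin d))) × ((EuclideanSpace ℝ (Fin d) × EuclideanSpace ℝ (Fin d))) → ℝ, Continuous f → (∀ w, |f w| ≤ K) →
      Integrable f M := fun f hc hb =>
    (integrable_const K).mono' hc.aestronglyMeasurable
      (Filter.Eventually.of_forall fun w => by simpa [Real.norm_eq_abs] using hb w)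
  have i1 : Integrable (fun w : ((EuclideanSpace ℝ (Fin d) × EuclideanSpace ℝ (Fin d))) × ((EuclideanSpace ℝ (Fin d) × EuclideanSpace ℝ (Fin d))) => κ₀ (w.1.1 - w.2.1)) M :=
    ibd _ (hκc.comp ((continuous_fst.comp continuous_fst).sub
      (continuous_fst.comp continuous_snd))) fun w => hbd _
  have i2 : Integrable (fun w : ((EuclideanSpace ℝ (Fin d) × EuclideanSpace ℝ (Fin d))) × ((EuclideanSpace ℝ (Fin d) × EuclideanSpace ℝ (Fin d))) =>
      κ₀ (w.1.1 + w.1.2 - (w.2.1 + w.2.2))) M :=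
    ibd _ (hκc.comp (((continuous_fst.comp continuous_fst).add
      (continuous_snd.comp continuous_fst)).sub
      ((continuous_fst.comp continuous_snd).add (continuous_snd.comp continuous_snd))))
      fun w => hbd _
  have hMP : M.map (Prod.map (Prod.snd : (EuclideanSpace ℝ (Fin d) × EuclideanSpace ℝ (Fin d)) → EuclideanSpace ℝ (Fin d)) Prod.snd) = m.prod m := by
    rw [hM, ← Measure.map_prod_map _ _ measurable_snd measurable_snd]
    simp
  have hdistc : Continuous (fun z : (EuclideanSpace ℝ (Fin d) × EuclideanSpace ℝ (Fin d)) => ‖z.1 - z.2‖) :=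
    (continuous_fst.sub continuous_snd).norm
  have iR0 : Integrable (fun w : ((EuclideanSpace ℝ (Fin d) × EuclideanSpace ℝ (Fin d))) × ((EuclideanSpace ℝ (Fin d) × EuclideanSpace ℝ (Fin d))) => ‖w.1.2 - w.2.2‖) M := by
    have := (integrable_map_measure
      (by rw [hMP]; exact hdistc.aestronglyMeasurable) hP.aemeasurable).mp
      (by rw [hMP]; exact hidist)
    exact this
  have iR : Integrable (fun w : ((EuclideanSpace ℝ (Fin d) × EuclideanSpace ℝ (Fin d))) × ((EuclideanSpace ℝ (Fin d) × EuclideanSpace ℝ (Fin d))) => (Lk : ℝ) * ‖w.1.2 - w.2.2‖) M :=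
    iR0.const_mul _
  have eR : ∫ w, (Lk : ℝ) * ‖w.1.2 - w.2.2‖ ∂M
      = (Lk : ℝ) * ∫ z, ‖z.1 - z.2‖ ∂(m.prod m) := by
    rw [integral_const_mul, ← hMP, integral_map hP.aemeasurable
      (by rw [hMP]; exact hdistc.aestronglyMeasurable)]
    rfl
  rw [e1, e2, ← integral_sub i1 i2, ← eR]
  calc |∫ w, (κ₀ (w.1.1 - w.2.1) - κ₀ (w.1.1 + w.1.2 - (w.2.1 + w.2.2))) ∂M|
      ≤ ∫ w, |κ₀ (w.1.1 - w.2.1) - κ₀ (w.1.1 + w.1.2 - (w.2.1 + w.2.2))| ∂M := by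
        simpa [Real.norm_eq_abs] using
          norm_integral_le_integral_norm
            (fun w : ((EuclideanSpace ℝ (Fin d) × EuclideanSpace ℝ (Fin d))) × ((EuclideanSpace ℝ (Fin d) × EuclideanSpace ℝ (Fin d))) =>
              κ₀ (w.1.1 - w.2.1) - κ₀ (w.1.1 + w.1.2 - (w.2.1 + w.2.2))) (μ := M)
    _ ≤ ∫ w, (Lk : ℝ) * ‖w.1.2 - w.2.2‖ ∂M := by
        refine integral_mono_of_nonneg (Filter.Eventually.of_forall fun w => abs_nonneg _) iR
          (Filter.Eventually.of_forall fun w => ?_)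
        have h := hL.dist_le_mul (w.1.1 - w.2.1) (w.1.1 + w.1.2 - (w.2.1 + w.2.2))
        rw [Real.dist_eq, dist_eq_norm] at h
        have hv : (w.1.1 - w.2.1) - (w.1.1 + w.1.2 - (w.2.1 + w.2.2)) = w.2.2 - w.1.2 := by
          abel
        calc |κ₀ (w.1.1 - w.2.1) - κ₀ (w.1.1 + w.1.2 - (w.2.1 + w.2.2))|
            ≤ (Lk : ℝ) * ‖(w.1.1 - w.2.1) - (w.1.1 + w.1.2 - (w.2.1 + w.2.2))‖ := h
          _ = (Lk : ℝ) * ‖w.1.2 - w.2.2‖ := by rw [hv, norm_sub_rev]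

/-- Noise-induced shift bound: for a bounded, Lipschitz translation-invariant kernel and
mean-square-ᾱ noise m, the squared MMDs of the clean and noise-convolved pairs differ by
at most 4 L_k √(2ᾱ). -/
theorem MMD2_noise_shift_bound {d : ℕ}
    (κ₀ : EuclideanSpace ℝ (Fin d) → ℝ) (Lk : ℝ≥0) (hL : LipschitzWith Lk κ₀)
    (K : ℝ) (hbd : ∀ z, |κ₀ z| ≤ K)
    (p q m : Measure (EuclideanSpace ℝ (Fin d)))
    [IsProbabilityMeasure p] [IsProbabilityMeasure q] [IsProbabilityMeasure m]
    (hmem : MemLp (fun u : EuclideanSpace ℝ (Fin d) => u) 2 m)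
    (αbar : ℝ) (hα : (∫ u, ‖u‖ ^ 2 ∂m) = αbar) :
    |MMD2 κ₀ p q - MMD2 κ₀ (mconv p m) (mconv q m)| ≤ 4 * Lk * Real.sqrt (2 * αbar) := by
  have hint1 : Integrable (fun u : EuclideanSpace ℝ (Fin d) => u) m :=
    hmem.integrable one_le_two
  have hnorm : Integrable (fun u : EuclideanSpace ℝ (Fin d) => ‖u‖) m := hint1.norm
  have hidist : Integrable (fun z : EuclideanSpace ℝ (Fin d) × EuclideanSpace ℝ (Fin d) =>
      ‖z.1 - z.2‖) (m.prod m) := by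
    refine ((hnorm.mul_prod (integrable_const (1:ℝ))).add
      ((integrable_const (1:ℝ)).mul_prod hnorm)).mono' ?_ ?_
    · exact (continuous_fst.sub continuous_snd).norm.aestronglyMeasurable
    · filter_upwards with z
      simp only [mul_one, one_mul, Real.norm_eq_abs, abs_norm]
      exact norm_sub_le _ _
  set C := ∫ z, ‖z.1 - z.2‖ ∂(m.prod m) with hC
  have hCnn : (0:ℝ) ≤ C := integral_nonneg fun z => norm_nonneg _
  have hCle : C ≤ Real.sqrt (2 * αbar) := aux_moment_bound m hmem αbar hα
  have h1 := aux_term_bound κ₀ Lk hL K hbd p p m hidist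
  have h2 := aux_term_bound κ₀ Lk hL K hbd q q m hidist
  have h3 := aux_term_bound κ₀ Lk hL K hbd p q m hidist
  rw [MMD2, MMD2]
  set a := (∫ z, κ₀ (z.1 - z.2) ∂(p.prod p))
    - ∫ z, κ₀ (z.1 - z.2) ∂((mconv p m).prod (mconv p m)) with ha
  set b := (∫ z, κ₀ (z.1 - z.2) ∂(q.prod q))
    - ∫ z, κ₀ (z.1 - z.2) ∂((mconv q m).prod (mconv q m)) with hb
  set c := (∫ z, κ₀ (z.1 - z.2) ∂(p.prod q))
    - ∫ z, κ₀ (z.1 - z.2) ∂((mconv p m).prod (mconv q m)) with hc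
  have key : |a + b - 2 * c| ≤ 4 * (Lk : ℝ) * C := by
    have h1a := le_abs_self a; have h1b := neg_abs_le a
    have h2a := le_abs_self b; have h2b := neg_abs_le b
    have h3a := le_abs_self c; have h3b := neg_abs_le c
    rw [← hC] at h1 h2 h3
    refine abs_le.mpr ⟨by linarith, by linarith⟩
  have hfinal : 4 * (Lk : ℝ) * C ≤ 4 * (Lk : ℝ) * Real.sqrt (2 * αbar) := by
    have : (0:ℝ) ≤ 4 * (Lk : ℝ) := by positivity
    exact mul_le_mul_of_nonneg_left hCle this
  calc |(∫ z, κ₀ (z.1 - z.2) ∂(p.prod p)) + (∫ z, κ₀ (z.1 - z.2) ∂(q.prod q))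
      - 2 * ∫ z, κ₀ (z.1 - z.2) ∂(p.prod q)
      - ((∫ z, κ₀ (z.1 - z.2) ∂((mconv p m).prod (mconv p m)))
        + (∫ z, κ₀ (z.1 - z.2) ∂((mconv q m).prod (mconv q m)))
        - 2 * ∫ z, κ₀ (z.1 - z.2) ∂((mconv p m).prod (mconv q m)))|
      = |a + b - 2 * c| := by rw [ha, hb, hc]; ring_nf
    _ ≤ 4 * (Lk : ℝ) * C := key
    _ ≤ 4 * (Lk : ℝ) * Real.sqrt (2 * αbar) := hfinal
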